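/- Let f, v̄, f̄ ∈ ℝ and c = ρπr³C_Q > 0 with v > 0. Then the quadratic form −(f − f̄)² − c(μ − σ²/2 − v − (f − f̄))ṽ² − c v((f − f̄) + ṽ)² is negative definite in (f − f̄, ṽ) provided μ − σ²/2 − v > |f − f̄| for all admissible f, which holds if μ + f̄ > σ²/2 + v + γ and |f| < γ. -/

import Mathlib

theorem sq_add_mul_sq_pos {x y a : ℝ} (ha : 0 < a) (h : x ≠ 0 ∨ y ≠ 0) :
    0 < x ^ 2 + a * y ^ 2 := by
  rcases h with hx | hy
  · exact add_pos_of_pos_of_nonneg (by positivity) (by positivity)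
  · exact add_pos_of_nonneg_of_pos (by positivity) (by positivity)

theorem neg_sq_sub_mul_sq_sub_mul_sq_lt_zero {x y a b : ℝ} (ha : 0 < a) (hb : 0 ≤ b)
    (h : x ≠ 0 ∨ y ≠ 0) : -x ^ 2 - a * y ^ 2 - b * (x + y) ^ 2 < 0 := by
  have hpos := sq_add_mul_sq_pos ha h
  have hnonneg : 0 ≤ b * (x + y) ^ 2 := by positivity
  linarith

/-- The quadratic form
`-(f-f̄)² - c(μ - σ²/2 - v - (f-f̄))ṽ² - cv((f-f̄)+ṽ)²`
is negative definite in `(f-f̄, ṽ)`, provided `μ + f̄ > σ²/2 + v + γ` and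
`|f| < γ` (so that `μ - σ²/2 - v - (f-f̄) > 0`), `c > 0`, `v > 0`. -/
theorem stmt_13 (c v μ σ γ fbar : ℝ) (hc : 0 < c) (hv : 0 < v)
    (hcond : μ + fbar > σ ^ 2 / 2 + v + γ) :
    ∀ f : ℝ, |f| < γ → ∀ vt : ℝ, (f ≠ fbar ∨ vt ≠ 0) →
      -(f - fbar) ^ 2 - c * (μ - σ ^ 2 / 2 - v - (f - fbar)) * vt ^ 2
        - c * v * ((f - fbar) + vt) ^ 2 < 0 := by
  intro f hf vt hne
  have hmargin : 0 < μ - σ ^ 2 / 2 - v - (f - fbar) := by linarith [lt_of_abs_lt hf]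
  exact neg_sq_sub_mul_sq_sub_mul_sq_lt_zero (mul_pos hc hmargin) (mul_pos hc hv).le
    (hne.imp_left sub_ne_zero.mpr)
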